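/- Let H be a Hermitian n×n complex matrix, J_1,…,J_M n×n complex matrices, λ_1,…,λ_M positive reals, and c_1,…,c_M complex numbers. Define H_ev = H + (i/2) Σ_{l=1}^M λ_l ( conj(c_l) J_l − c_l J_lᴴ ), which is Hermitian. Let S ⊆ ℂⁿ be a subspace such that every ψ ∈ S satisfies J_l ψ = c_l ψ for all l, and such that H_ev maps S into S. Then for every ψ₀ ∈ S and every t ∈ ℝ, exp(t𝓛)(ψ₀ψ₀ᴴ) = exp(−itH_ev) · ψ₀ψ₀ᴴ · exp(itH_ev). In particular, for unit ψ₀ ∈ S the purity Tr[ (exp(t𝓛)(ψ₀ψ₀ᴴ))² ] equals 1 for all t, so S is a decoherence-free subspace in the sense that all pure states from S evolve unitarily. -/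

import Mathlib

/-!
On operators supported on `S` (column and row spaces inside `S`) the jump conditions
`J_l ρ = c_l ρ`, `ρ J_lᴴ = conj c_l ρ` collapse the dissipator to a commutator, so that
`𝓛 ρ = -i[H_ev, ρ]` there. Since `H_ev` is Hermitian and preserves `S`, this space is invariant
under `-i[H_ev, ·]`, hence the exponential series of `t𝓛` and of `-it[H_ev, ·]` agree on it, and
the latter splits into left and right multiplication by `exp(∓itH_ev)`. Conjugating the rank-one
idempotent `ψ₀ψ₀ᴴ` by this unitary keeps it an idempotent of trace one.
-/

open Matrix BigOperators

attribute [local instance] Matrix.linftyOpNormedAddCommGroup Matrix.linftyOpNormedRing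
  Matrix.linftyOpNormedAlgebra

/-- The decoherence superoperator `L_D[ρ] = Σ_l λ_l (J_l ρ J_lᴴ − ½ J_lᴴ J_l ρ − ½ ρ J_lᴴ J_l)`. -/
noncomputable def LD {M n : ℕ} (J : Fin M → Matrix (Fin n) (Fin n) ℂ)
    (lam : Fin M → ℝ) (ρ : Matrix (Fin n) (Fin n) ℂ) : Matrix (Fin n) (Fin n) ℂ :=
  ∑ l, (lam l : ℂ) • (J l * ρ * (J l)ᴴ
    - (1 / 2 : ℂ) • ((J l)ᴴ * J l * ρ) - (1 / 2 : ℂ) • (ρ * ((J l)ᴴ * J l)))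

/-- The decoherence operator `Γ = Σ_l λ_l J_lᴴ J_l`. -/
noncomputable def Gam {M n : ℕ} (J : Fin M → Matrix (Fin n) (Fin n) ℂ)
    (lam : Fin M → ℝ) : Matrix (Fin n) (Fin n) ℂ :=
  ∑ l, (lam l : ℂ) • ((J l)ᴴ * J l)

/-- The Liouvillian `𝓛[ρ] = −i[H,ρ] + L_D[ρ]` as a continuous linear endomorphism of the
space of `n×n` complex matrices (equipped with the `L∞`-operator norm). -/
noncomputable def Liou {M n : ℕ} (H : Matrix (Fin n) (Fin n) ℂ)
    (J : Fin M → Matrix (Fin n) (Fin n) ℂ) (lam : Fin M → ℝ) :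
    Matrix (Fin n) (Fin n) ℂ →L[ℂ] Matrix (Fin n) (Fin n) ℂ :=
  LinearMap.toContinuousLinearMap
    ((-Complex.I) • (LinearMap.mulLeft ℂ H - LinearMap.mulRight ℂ H)
      + ∑ l, (lam l : ℂ) •
          ((LinearMap.mulRight ℂ (J l)ᴴ).comp (LinearMap.mulLeft ℂ (J l))
            - (1 / 2 : ℂ) • LinearMap.mulLeft ℂ ((J l)ᴴ * J l)
            - (1 / 2 : ℂ) • LinearMap.mulRight ℂ ((J l)ᴴ * J l)))

/-- The Liouvillian indeed sends `ρ` to `−i[H,ρ] + L_D[ρ]`. -/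
theorem Liou_apply {M n : ℕ} (H : Matrix (Fin n) (Fin n) ℂ)
    (J : Fin M → Matrix (Fin n) (Fin n) ℂ) (lam : Fin M → ℝ)
    (ρ : Matrix (Fin n) (Fin n) ℂ) :
    Liou H J lam ρ = (-Complex.I) • (H * ρ - ρ * H) + LD J lam ρ := by
  simp [Liou, LD, LinearMap.mulLeft, LinearMap.mulRight]

/-- Port helper: the `L∞`-operator-norm ring structure on the space of continuous linear
endomorphisms makes it a topological ring (no longer found automatically). -/
instance matCLM_isTopologicalRing (n : ℕ) :
    IsTopologicalRing (Matrix (Fin n) (Fin n) ℂ →L[ℂ] Matrix (Fin n) (Fin n) ℂ) :=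
  @NonUnitalSeminormedRing.toIsTopologicalRing _ (@ContinuousLinearMap.toNormedRing ℂ
    (Matrix (Fin n) (Fin n) ℂ) _ _ _).toNonUnitalNormedRing.toNonUnitalSeminormedRing

/-- `exp(t𝓛)`, the exponential of the Liouvillian as a linear map. -/
noncomputable def expL {M n : ℕ} (H : Matrix (Fin n) (Fin n) ℂ)
    (J : Fin M → Matrix (Fin n) (Fin n) ℂ) (lam : Fin M → ℝ) (t : ℝ) :
    Matrix (Fin n) (Fin n) ℂ →L[ℂ] Matrix (Fin n) (Fin n) ℂ :=
  NormedSpace.exp ((t : ℂ) • Liou H J lam)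

/-- The matrix exponential `exp(−itH)`. -/
noncomputable def expM {n : ℕ} (H : Matrix (Fin n) (Fin n) ℂ) (t : ℝ) :
    Matrix (Fin n) (Fin n) ℂ :=
  NormedSpace.exp ((-(Complex.I * (t : ℂ))) • H)
/-- `H_ev = H + (i/2) Σ_l λ_l (conj c_l · J_l − c_l · J_lᴴ)`. -/
noncomputable def Hev {M n : ℕ} (H : Matrix (Fin n) (Fin n) ℂ)
    (J : Fin M → Matrix (Fin n) (Fin n) ℂ) (lam : Fin M → ℝ) (c : Fin M → ℂ) :
    Matrix (Fin n) (Fin n) ℂ :=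
  H + (Complex.I / 2) • ∑ l, (lam l : ℂ) • ((starRingEnd ℂ) (c l) • J l - c l • (J l)ᴴ)

open NormedSpace ContinuousLinearMap

section BanachSpace

variable {𝕜 E : Type*} [RCLike 𝕜] [NormedAddCommGroup E] [NormedSpace 𝕜 E] [CompleteSpace E]

theorem exp_apply_eq_exp_apply_of_eqOn {L D : E →L[𝕜] E} {W : Submodule 𝕜 E}
    (hDW : Set.MapsTo D W W) (hLD : Set.EqOn L D W) {x : E} (hx : x ∈ W) :
    exp L x = exp D x := by
  have hpow : ∀ k : ℕ, ∀ x ∈ W, (L ^ k) x = (D ^ k) x := by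
    intro k
    induction k with
    | zero => simp
    | succ k ih =>
      intro x hx
      rw [pow_succ, pow_succ]
      exact (congrArg (L ^ k) (hLD hx)).trans (ih _ (hDW hx))
  have hL := (exp_series_hasSum_exp' (𝕂 := 𝕜) L).mapL (apply 𝕜 E x)
  have hD := (exp_series_hasSum_exp' (𝕂 := 𝕜) D).mapL (apply 𝕜 E x)
  simp only [ContinuousLinearMap.apply_apply, _root_.smul_apply, fun k => hpow k x hx] at hL hD
  exact hL.unique hD

end BanachSpace

section BanachAlgebra

variable {𝕜 𝔸 : Type*} [RCLike 𝕜] [NormedRing 𝔸] [NormedAlgebra 𝕜 𝔸] [CompleteSpace 𝔸]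

theorem exp_mul_eq_mul_exp (a : 𝔸) : exp (mul 𝕜 𝔸 a) = mul 𝕜 𝔸 (exp a) := by
  let f : 𝔸 →+* (𝔸 →L[𝕜] 𝔸) :=
    { toFun := mul 𝕜 𝔸
      map_one' := by ext; simp
      map_mul' := fun a b => by ext; simp [mul_assoc]
      map_zero' := map_zero _
      map_add' := map_add _ }
  refine (map_exp_of_mem_ball (𝕂 := 𝕜) f (mul 𝕜 𝔸).continuous a ?_).symm
  simp [expSeries_radius_eq_top]

theorem exp_flip_mul_eq_flip_mul_exp (b : 𝔸) :
    exp ((mul 𝕜 𝔸).flip b) = (mul 𝕜 𝔸).flip (exp b) := by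
  let f : 𝔸ᵐᵒᵖ →+* (𝔸 →L[𝕜] 𝔸) :=
    { toFun := fun b => (mul 𝕜 𝔸).flip b.unop
      map_one' := by ext; simp
      map_mul' := fun a b => by ext; simp [mul_assoc]
      map_zero' := by simp
      map_add' := fun a b => by simp }
  have hf : Continuous f := (mul 𝕜 𝔸).flip.continuous.comp MulOpposite.continuous_unop
  refine ((map_exp_of_mem_ball (𝕂 := 𝕜) f hf (MulOpposite.op b) ?_).symm.trans ?_)
  · simp [expSeries_radius_eq_top]
  · simp [f, exp_op]

theorem exp_mul_add_flip_mul_apply (a b x : 𝔸) :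
    exp (mul 𝕜 𝔸 a + (mul 𝕜 𝔸).flip b) x = exp a * x * exp b := by
  have hcomm : Commute (mul 𝕜 𝔸 a) ((mul 𝕜 𝔸).flip b) := by
    ext; simp [mul_assoc]
  rw [exp_add_of_commute_of_mem_ball (𝕂 := 𝕜) hcomm (by simp [expSeries_radius_eq_top])
    (by simp [expSeries_radius_eq_top]), exp_mul_eq_mul_exp, exp_flip_mul_eq_flip_mul_exp]
  simp [mul_assoc]

end BanachAlgebra

section Matrix

variable {ι R : Type*} [Fintype ι] [CommRing R]

theorem trace_mul_self_conj_vecMulVec [DecidableEq ι] {U V : Matrix ι ι R} (hVU : V * U = 1)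
    {ψ φ : ι → R} (h : φ ⬝ᵥ ψ = 1) :
    trace (U * vecMulVec ψ φ * V * (U * vecMulVec ψ φ * V)) = 1 := by
  have hidem : vecMulVec ψ φ * vecMulVec ψ φ = vecMulVec ψ φ := by
    rw [vecMulVec_mul_vecMulVec, h, one_smul]
  calc trace (U * vecMulVec ψ φ * V * (U * vecMulVec ψ φ * V))
      = trace (U * (vecMulVec ψ φ * (V * U) * vecMulVec ψ φ) * V) := by
        simp only [Matrix.mul_assoc]
    _ = trace (U * vecMulVec ψ φ * V) := by rw [hVU, Matrix.mul_one, hidem]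
    _ = 1 := by rw [trace_mul_cycle, hVU, Matrix.one_mul, trace_vecMulVec, dotProduct_comm, h]

variable [StarRing R] (S : Submodule R (ι → R))

-- Over `ℂ`, these are the `ρ` with `ρ = P ρ P`, where `P` is the orthogonal projection onto `S`.
def matricesOn : Submodule R (Matrix ι ι R) where
  carrier := {ρ | ∀ v, ρ *ᵥ v ∈ S ∧ ρᴴ *ᵥ v ∈ S}
  add_mem' {ρ σ} hρ hσ v := by
    simpa only [add_mulVec, conjTranspose_add] using
      ⟨S.add_mem (hρ v).1 (hσ v).1, S.add_mem (hρ v).2 (hσ v).2⟩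
  zero_mem' v := by simp
  smul_mem' r ρ hρ v := by
    simpa only [smul_mulVec, conjTranspose_smul] using
      ⟨S.smul_mem r (hρ v).1, S.smul_mem (star r) (hρ v).2⟩

variable {S}

theorem conjTranspose_mem_matricesOn {ρ : Matrix ι ι R} (hρ : ρ ∈ matricesOn S) :
    ρᴴ ∈ matricesOn S :=
  fun v => by simpa only [conjTranspose_conjTranspose] using (hρ v).symm

theorem vecMulVec_star_mem_matricesOn {ψ φ : ι → R} (hψ : ψ ∈ S) (hφ : φ ∈ S) :
    vecMulVec ψ (star φ) ∈ matricesOn S := fun v => by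
  simp only [conjTranspose_vecMulVec, star_star, vecMulVec_mulVec, op_smul_eq_smul]
  exact ⟨S.smul_mem _ hψ, S.smul_mem _ hφ⟩

theorem mul_mem_matricesOn {A ρ : Matrix ι ι R} (hA : ∀ ψ ∈ S, A *ᵥ ψ ∈ S)
    (hρ : ρ ∈ matricesOn S) : A * ρ ∈ matricesOn S := fun v => by
  simp only [conjTranspose_mul, ← mulVec_mulVec]
  exact ⟨hA _ (hρ v).1, (hρ _).2⟩

theorem mul_mem_matricesOn_of_conjTranspose {B ρ : Matrix ι ι R}
    (hB : ∀ ψ ∈ S, Bᴴ *ᵥ ψ ∈ S) (hρ : ρ ∈ matricesOn S) : ρ * B ∈ matricesOn S := by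
  simpa only [conjTranspose_mul, conjTranspose_conjTranspose] using
    conjTranspose_mem_matricesOn (mul_mem_matricesOn hB (conjTranspose_mem_matricesOn hρ))

theorem mul_eq_smul_of_mem_matricesOn {J ρ : Matrix ι ι R} {c : R}
    (hJ : ∀ ψ ∈ S, J *ᵥ ψ = c • ψ) (hρ : ρ ∈ matricesOn S) : J * ρ = c • ρ := by
  rw [ext_iff_mulVec]
  intro v
  rw [← mulVec_mulVec, hJ _ (hρ v).1, smul_mulVec]

theorem mul_conjTranspose_eq_smul_of_mem_matricesOn {J ρ : Matrix ι ι R} {c : R}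
    (hJ : ∀ ψ ∈ S, J *ᵥ ψ = c • ψ) (hρ : ρ ∈ matricesOn S) : ρ * Jᴴ = star c • ρ := by
  apply conjTranspose_injective
  rw [conjTranspose_mul, conjTranspose_conjTranspose, conjTranspose_smul, star_star,
    mul_eq_smul_of_mem_matricesOn hJ (conjTranspose_mem_matricesOn hρ)]

end Matrix

section Lindblad

variable {M n : ℕ} (H : Matrix (Fin n) (Fin n) ℂ) (J : Fin M → Matrix (Fin n) (Fin n) ℂ)
  (lam : Fin M → ℝ) (c : Fin M → ℂ)

theorem isHermitian_Hev (hH : H.IsHermitian) : (Hev H J lam c).IsHermitian := by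
  have hskew : (∑ l, (lam l : ℂ) • ((starRingEnd ℂ) (c l) • J l - c l • (J l)ᴴ))ᴴ
      = -∑ l, (lam l : ℂ) • ((starRingEnd ℂ) (c l) • J l - c l • (J l)ᴴ) := by
    rw [conjTranspose_sum, ← Finset.sum_neg_distrib]
    refine Finset.sum_congr rfl fun l _ => ?_
    simp only [conjTranspose_smul, conjTranspose_sub, conjTranspose_conjTranspose,
      Complex.star_def, Complex.conj_ofReal, Complex.conj_conj]
    module
  have hI : star (Complex.I / 2) = -(Complex.I / 2) := by
    simp [Complex.conj_I, neg_div]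
  rw [IsHermitian, Hev, conjTranspose_add, conjTranspose_smul, hskew, hH.eq, hI, neg_smul_neg]

theorem Liou_apply_eq_commutator_Hev {ρ : Matrix (Fin n) (Fin n) ℂ}
    (hJ : ∀ l, J l * ρ = c l • ρ) (hJ' : ∀ l, ρ * (J l)ᴴ = star (c l) • ρ) :
    Liou H J lam ρ = (-Complex.I) • (Hev H J lam c * ρ - ρ * Hev H J lam c) := by
  set K : Fin M → Matrix (Fin n) (Fin n) ℂ :=
    fun l => (lam l : ℂ) • ((starRingEnd ℂ) (c l) • J l - c l • (J l)ᴴ)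
  have hterm : ∀ l, (lam l : ℂ) • (J l * ρ * (J l)ᴴ
      - (1 / 2 : ℂ) • ((J l)ᴴ * J l * ρ) - (1 / 2 : ℂ) • (ρ * ((J l)ᴴ * J l)))
      = (-Complex.I) • ((Complex.I / 2) • (K l * ρ - ρ * K l)) := by
    intro l
    rw [Matrix.mul_assoc (J l)ᴴ, ← Matrix.mul_assoc ρ, hJ l, Matrix.smul_mul, hJ' l]
    simp only [K, Matrix.smul_mul, Matrix.mul_smul, Matrix.sub_mul, Matrix.mul_sub, hJ l, hJ' l,
      Complex.star_def]
    rw [smul_smul (-Complex.I), show -Complex.I * (Complex.I / 2) = 1 / 2 by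
      rw [neg_mul, ← mul_div_assoc, Complex.I_mul_I]; ring]
    module
  rw [Liou_apply, LD, Finset.sum_congr rfl fun l _ => hterm l, ← Finset.smul_sum,
    ← Finset.smul_sum, Finset.sum_sub_distrib, ← Finset.sum_mul, ← Finset.mul_sum, Hev]
  simp only [Matrix.add_mul, Matrix.mul_add, Matrix.smul_mul, Matrix.mul_smul, K]
  module

end Lindblad

theorem expM_neg_mul_expM {n : ℕ} (A : Matrix (Fin n) (Fin n) ℂ) (t : ℝ) :
    expM A (-t) * expM A t = 1 := by
  rw [expM, expM, ← Matrix.exp_add_of_commute _ _ (((Commute.refl A).smul_left _).smul_right _),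
    ← add_smul]
  simp

theorem expL_apply_of_mem_matricesOn {M n : ℕ} {H : Matrix (Fin n) (Fin n) ℂ}
    (hH : H.IsHermitian) {J : Fin M → Matrix (Fin n) (Fin n) ℂ} {lam : Fin M → ℝ}
    {c : Fin M → ℂ} {S : Submodule ℂ (Fin n → ℂ)}
    (heig : ∀ ψ ∈ S, ∀ l, J l *ᵥ ψ = c l • ψ) (hinv : ∀ ψ ∈ S, Hev H J lam c *ᵥ ψ ∈ S)
    (t : ℝ) {ρ : Matrix (Fin n) (Fin n) ℂ} (hρ : ρ ∈ matricesOn S) :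
    expL H J lam t ρ = expM (Hev H J lam c) t * ρ * expM (Hev H J lam c) (-t) := by
  set A := Hev H J lam c
  have hsmul_inv : ∀ z : ℂ, ∀ ψ ∈ S, (z • A) *ᵥ ψ ∈ S := fun z ψ hψ => by
    rw [smul_mulVec]
    exact S.smul_mem _ (hinv ψ hψ)
  have hsmul_inv' : ∀ z : ℂ, ∀ ψ ∈ S, (z • A)ᴴ *ᵥ ψ ∈ S := fun z => by
    rw [conjTranspose_smul, (isHermitian_Hev H J lam c hH).eq]
    exact hsmul_inv _
  set D := mul ℂ _ ((-(Complex.I * t)) • A)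
    + (mul ℂ _).flip ((-(Complex.I * ((-t : ℝ) : ℂ))) • A)
  have hDW : Set.MapsTo D (matricesOn S) (matricesOn S) := fun σ hσ =>
    add_mem (mul_mem_matricesOn (hsmul_inv _) hσ)
      (mul_mem_matricesOn_of_conjTranspose (hsmul_inv' _) hσ)
  have hLD : Set.EqOn ((t : ℂ) • Liou H J lam) D (matricesOn S) := fun σ hσ => by
    rw [_root_.smul_apply, Liou_apply_eq_commutator_Hev H J lam c
      (fun l => mul_eq_smul_of_mem_matricesOn (heig · · l) hσ)
      (fun l => mul_conjTranspose_eq_smul_of_mem_matricesOn (heig · · l) hσ)]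
    simp only [D, _root_.add_apply, ContinuousLinearMap.mul_apply', ContinuousLinearMap.flip_apply,
      Matrix.smul_mul, Matrix.mul_smul]
    module
  exact (exp_apply_eq_exp_apply_of_eqOn hDW hLD hρ).trans (exp_mul_add_flip_mul_apply _ _ ρ)

theorem stmt12_general {M n : ℕ} (H : Matrix (Fin n) (Fin n) ℂ) (hH : H.IsHermitian)
    (J : Fin M → Matrix (Fin n) (Fin n) ℂ) (lam : Fin M → ℝ)
    (c : Fin M → ℂ)
    (S : Submodule ℂ (Fin n → ℂ))
    (heig : ∀ ψ ∈ S, ∀ l, (J l).mulVec ψ = c l • ψ)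
    (hinv : ∀ ψ ∈ S, (Hev H J lam c).mulVec ψ ∈ S) :
    (Hev H J lam c).IsHermitian
    ∧ (∀ ψ₀ ∈ S, ∀ t : ℝ,
        expL H J lam t (vecMulVec ψ₀ (star ψ₀))
          = expM (Hev H J lam c) t * vecMulVec ψ₀ (star ψ₀) * expM (Hev H J lam c) (-t))
    ∧ ∀ ψ₀ ∈ S, star ψ₀ ⬝ᵥ ψ₀ = 1 → ∀ t : ℝ,
        Matrix.trace (expL H J lam t (vecMulVec ψ₀ (star ψ₀))
          * expL H J lam t (vecMulVec ψ₀ (star ψ₀))) = 1 := by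
  have hevol : ∀ ψ₀ ∈ S, ∀ t : ℝ, expL H J lam t (vecMulVec ψ₀ (star ψ₀))
      = expM (Hev H J lam c) t * vecMulVec ψ₀ (star ψ₀) * expM (Hev H J lam c) (-t) :=
    fun ψ₀ hψ₀ t =>
      expL_apply_of_mem_matricesOn hH heig hinv t (vecMulVec_star_mem_matricesOn hψ₀ hψ₀)
  refine ⟨isHermitian_Hev H J lam c hH, hevol, fun ψ₀ hψ₀ hunit t => ?_⟩
  rw [hevol ψ₀ hψ₀ t]
  exact trace_mul_self_conj_vecMulVec (expM_neg_mul_expM _ t) hunit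

/-- Theorem (general dynamically stable DFS, sufficiency): if every `ψ ∈ S` satisfies
`J_l ψ = c_l ψ` and `S` is invariant under the Hermitian matrix `H_ev`, then every state
from `S` evolves unitarily, `exp(t𝓛)(ψ₀ψ₀ᴴ) = exp(−itH_ev) ψ₀ψ₀ᴴ exp(itH_ev)`, and in
particular the purity of any unit `ψ₀ ∈ S` stays equal to `1`. -/
theorem stmt12 {M n : ℕ} (H : Matrix (Fin n) (Fin n) ℂ) (hH : H.IsHermitian)
    (J : Fin M → Matrix (Fin n) (Fin n) ℂ) (lam : Fin M → ℝ) (hlam : ∀ l, 0 < lam l)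
    (c : Fin M → ℂ)
    (S : Submodule ℂ (Fin n → ℂ))
    (heig : ∀ ψ ∈ S, ∀ l, (J l).mulVec ψ = c l • ψ)
    (hinv : ∀ ψ ∈ S, (Hev H J lam c).mulVec ψ ∈ S) :
    (Hev H J lam c).IsHermitian
    ∧ (∀ ψ₀ ∈ S, ∀ t : ℝ,
        expL H J lam t (vecMulVec ψ₀ (star ψ₀))
          = expM (Hev H J lam c) t * vecMulVec ψ₀ (star ψ₀) * expM (Hev H J lam c) (-t))
    ∧ ∀ ψ₀ ∈ S, star ψ₀ ⬝ᵥ ψ₀ = 1 → ∀ t : ℝ,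
        Matrix.trace (expL H J lam t (vecMulVec ψ₀ (star ψ₀))
          * expL H J lam t (vecMulVec ψ₀ (star ψ₀))) = 1 :=
  stmt12_general H hH J lam c S heig hinv
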